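/- arXiv:1206.4227 — 2 statements merged into one kernel-verified Lean document; each statement's English description precedes it below -/
import Mathlib

section
/- The number of toroidal knot 1-mosaics is 7: exactly 7 of the 11 standard mosaic tiles are toroidally suitably connected as 1×1 toroidal mosaics, namely the blank tile, the horizontal line, the vertical line, the two crossing tiles, and the two double-arc tiles. -/
/- The 11 standard mosaic tiles, encoded by their connection points on the four
edges (`0` = left, `1` = top, `2` = right, `3` = bottom). -/
def T0 : Fin 4 → Bool := ![false, false, false, false]  -- blank
def T1 : Fin 4 → Bool := ![true, false, false, true]    -- arc left–bottom
def T2 : Fin 4 → Bool := ![false, false, true, true]    -- arc bottom–right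
def T3 : Fin 4 → Bool := ![false, true, true, false]    -- arc right–top
def T4 : Fin 4 → Bool := ![true, true, false, false]    -- arc top–left
def T5 : Fin 4 → Bool := ![true, false, true, false]    -- horizontal line
def T6 : Fin 4 → Bool := ![false, true, false, true]    -- vertical line
def T7 : Fin 4 → Bool := ![true, true, true, true]      -- double arc
def T8 : Fin 4 → Bool := ![true, true, true, true]      -- double arc
def T9 : Fin 4 → Bool := ![true, true, true, true]      -- crossing
def T10 : Fin 4 → Bool := ![true, true, true, true]     -- crossing

/-- A single tile, as a `1×1` toroidal mosaic, is toroidally suitably connected iff its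
left and right connection points agree and its top and bottom connection points agree. -/
def Connected1 (t : Fin 4 → Bool) : Prop := t 0 = t 2 ∧ t 1 = t 3

instance : DecidablePred Connected1 :=
  fun t => inferInstanceAs (Decidable (t 0 = t 2 ∧ t 1 = t 3))

/-- Exactly 7 of the 11 standard tiles are toroidally suitably connected `1`-mosaics,
namely the blank tile, the two lines, the two double arcs and the two crossings. -/
theorem toroidal_one_mosaics_count :
    Connected1 T0 ∧ ¬ Connected1 T1 ∧ ¬ Connected1 T2 ∧ ¬ Connected1 T3 ∧
    ¬ Connected1 T4 ∧ Connected1 T5 ∧ Connected1 T6 ∧ Connected1 T7 ∧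
    Connected1 T8 ∧ Connected1 T9 ∧ Connected1 T10 ∧
    ([T0, T1, T2, T3, T4, T5, T6, T7, T8, T9, T10].countP
      (fun t => (t 0 == t 2) && (t 1 == t 3))) = 7 := by
  decide
end

section
/- No planar knot n-mosaic is dense: every planarly suitably connected n-mosaic has total waste at least n. In particular its total waste is strictly positive. -/
/-- The (normalized) waste of a tile: ¼ the number of edges without connection points
(edges: `0` = left, `1` = top, `2` = right, `3` = bottom). -/
def waste (t : Fin 4 → Bool) : ℚ :=
  (1 / 4) * ((Finset.univ.filter (fun e : Fin 4 => t e = false)).card : ℚ)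

/-- Total waste of an `n`-mosaic: the sum of its tiles' wastes. -/
def totalWaste {n : ℕ} (M : Fin n × Fin n → (Fin 4 → Bool)) : ℚ :=
  ∑ p : Fin n × Fin n, waste (M p)

lemma waste_eq (t : Fin 4 → Bool) :
    waste t = ∑ e : Fin 4, (if t e = false then (1/4 : ℚ) else 0) := by
  rw [waste, ← Finset.sum_filter, Finset.sum_const, nsmul_eq_mul]
  ring

/-- No planar knot `n`-mosaic is dense: any planarly suitably connected `n`-mosaic
(interior shared edges match, no connection points on the outer boundary) has total
waste at least `n`, hence strictly positive. -/
theorem planar_not_dense {n : ℕ} (hn : 0 < n) (M : Fin n × Fin n → (Fin 4 → Bool))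
    (h1 : ∀ (i j : Fin n) (h : (j : ℕ) + 1 < n), M (i, j) 2 = M (i, ⟨(j : ℕ) + 1, h⟩) 0)
    (h2 : ∀ (i j : Fin n) (h : (i : ℕ) + 1 < n), M (i, j) 3 = M (⟨(i : ℕ) + 1, h⟩, j) 1)
    (hleft : ∀ i : Fin n, M (i, ⟨0, hn⟩) 0 = false)
    (hright : ∀ i : Fin n, M (i, ⟨n - 1, Nat.sub_lt hn one_pos⟩) 2 = false)
    (htop : ∀ j : Fin n, M (⟨0, hn⟩, j) 1 = false)
    (hbot : ∀ j : Fin n, M (⟨n - 1, Nat.sub_lt hn one_pos⟩, j) 3 = false) :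
    (n : ℚ) ≤ totalWaste M ∧ 0 < totalWaste M := by
  set c0 : Fin n := ⟨0, hn⟩ with hc0
  set cN : Fin n := ⟨n - 1, Nat.sub_lt hn one_pos⟩ with hcN
  have hper : ∀ p : Fin n × Fin n,
      ((if p.2 = c0 then (1/4:ℚ) else 0) + (if p.1 = c0 then (1/4:ℚ) else 0)
        + (if p.2 = cN then (1/4:ℚ) else 0) + (if p.1 = cN then (1/4:ℚ) else 0))
      ≤ waste (M p) := by
    rintro ⟨i, j⟩
    rw [waste_eq, Fin.sum_univ_four]
    have e0 : (if j = c0 then (1/4:ℚ) else 0) ≤ (if M (i, j) 0 = false then (1/4:ℚ) else 0) := by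
      split_ifs with h h'
      · norm_num
      · subst h; exact absurd (hleft i) h'
      · norm_num
      · norm_num
    have e1 : (if i = c0 then (1/4:ℚ) else 0) ≤ (if M (i, j) 1 = false then (1/4:ℚ) else 0) := by
      split_ifs with h h'
      · norm_num
      · subst h; exact absurd (htop j) h'
      · norm_num
      · norm_num
    have e2 : (if j = cN then (1/4:ℚ) else 0) ≤ (if M (i, j) 2 = false then (1/4:ℚ) else 0) := by
      split_ifs with h h'
      · norm_num
      · subst h; exact absurd (hright i) h'
      · norm_num
      · norm_num
    have e3 : (if i = cN then (1/4:ℚ) else 0) ≤ (if M (i, j) 3 = false then (1/4:ℚ) else 0) := by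
      split_ifs with h h'
      · norm_num
      · subst h; exact absurd (hbot j) h'
      · norm_num
      · norm_num
    exact add_le_add (add_le_add (add_le_add e0 e1) e2) e3
  have key : (n : ℚ) ≤ totalWaste M := by
    have hsum : ∑ p : Fin n × Fin n,
        ((if p.2 = c0 then (1/4:ℚ) else 0) + (if p.1 = c0 then (1/4:ℚ) else 0)
          + (if p.2 = cN then (1/4:ℚ) else 0) + (if p.1 = cN then (1/4:ℚ) else 0)) = (n : ℚ) := by
      rw [Fintype.sum_prod_type]
      simp [Finset.sum_add_distrib, Finset.sum_ite_eq', Finset.sum_const, Finset.card_univ]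
      ring
    calc (n : ℚ) = _ := hsum.symm
      _ ≤ totalWaste M := Finset.sum_le_sum fun p _ => hper p
  refine ⟨key, lt_of_lt_of_le ?_ key⟩
  exact_mod_cast hn
end
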